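/- arXiv:1512.04237 — 3 statements merged into one kernel-verified Lean document; each statement's English description precedes it below -/
import Mathlib

section
/- Let n ≥ 2 and let N be a non-trivial normal subgroup of the free group F_n. Then δ(N) > (1/2)·log(2n−1), i.e. the cogrowth η(F_n/N) = δ(N)/log(2n−1) is strictly greater than 1/2. -/
/-!
Pick `w ≠ 1` in `N` with reduced word `l` of length `L`, and let `Q = 2n - 1`. For words
`u₁, …, u_k` the word `u₁ l u₂ l ⋯ u_k l u_k⁻¹ ⋯ u₁⁻¹` is the product of the conjugates of `w` by
`u₁ ⋯ u_i`, so it lies in `N`. If each `u_i` is reduced, starts with a letter `e` and ends with a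
letter `p` chosen so that no junction cancels, the word is reduced, and since `e` is not the first
letter of `l`, the `u_i` can be read off from it. Such a `u_i` with `m` free letters can be chosen
in `Q ^ m` ways.

Take the `u_i` in pairs obtained by cutting a free word of length `J` at one of `J + 1` places:
a pair adds `2K` letters, `K = J + 6 + L`, and offers `(J + 1) Q ^ J` choices, whereas growth rate
`√Q` would only allow `Q ^ K`. For `J = Q ^ (L + 7)` every pair gains a factor `Q`, so `N` has at
least `Q ^ (s (K + 1))` elements of length at most `2Ks`, and `δ(N) ≥ (K + 1) / (2K) · log Q`.
-/

open Filter Real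

noncomputable section

namespace JM

/-- The free group of rank `n`. -/
abbrev F (n : ℕ) := FreeGroup (Fin n)

/-- The Poincaré exponent of a subgroup `G` of the free group, with respect to the
word metric of the standard free generating set. -/
def poincareExponent (n : ℕ) (G : Subgroup (F n)) : ℝ :=
  limsup (fun R : ℕ =>
    Real.log (Nat.card {g : F n // g ∈ G ∧ FreeGroup.norm g ≤ R}) / R) atTop

/-- `G` is of divergence type if its Poincaré series diverges at the exponent. -/
def DivergenceType (n : ℕ) (G : Subgroup (F n)) : Prop :=
  ¬ Summable (fun g : G => Real.exp (-(poincareExponent n G) * FreeGroup.norm (g : F n)))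

/-- The vertex set of the quotient graph `Γ_H = T_n/H`: the right cosets `Hg`. -/
abbrev Cosets (n : ℕ) (H : Subgroup (F n)) := Quotient (QuotientGroup.rightRel H)

/-- Right multiplication on right cosets: `Hg ↦ Hga`. -/
def rmul {n : ℕ} {H : Subgroup (F n)} (x : Cosets n H) (a : F n) : Cosets n H :=
  Quotient.liftOn x (fun g => Quotient.mk (QuotientGroup.rightRel H) (g * a))
    (fun b c h => Quotient.sound (by
      have h' := QuotientGroup.rightRel_apply.mp h
      show (QuotientGroup.rightRel H) _ _
      rw [QuotientGroup.rightRel_apply]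
      simpa [mul_assoc] using h'))

/-- Distance from the base vertex `H` to the vertex `Hg` in the quotient graph,
namely `min_{h ∈ H} |hg|`. -/
def cosetDist {n : ℕ} {H : Subgroup (F n)} (x : Cosets n H) : ℕ :=
  sInf (FreeGroup.norm '' {g : F n | Quotient.mk (QuotientGroup.rightRel H) g = x})

/-- The exponential growth rate of the quotient graph `Γ_H = T_n/H`. -/
def graphGrowth (n : ℕ) (H : Subgroup (F n)) : ℝ :=
  limsup (fun R : ℕ =>
    (Nat.card {x : Cosets n H // cosetDist x ≤ R} : ℝ) ^ (1 / (R : ℝ))) atTop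

/-- the generators `S ∪ S⁻¹`, indexed by `Fin n × Bool`. -/
def sgen {n : ℕ} (p : Fin n × Bool) : F n :=
  if p.2 then FreeGroup.of p.1 else (FreeGroup.of p.1)⁻¹

/-- The number of boundary edges of a finite set `A` of vertices of `Γ_H`. -/
def boundaryCard {n : ℕ} {H : Subgroup (F n)} (A : Finset (Cosets n H)) : ℕ :=
  Nat.card {p : Cosets n H × (Fin n × Bool) // p.1 ∈ A ∧ rmul p.1 (sgen p.2) ∉ A}

/-- The isoperimetric constant of the `2n`-regular graph `Γ_H`. -/
def isoConst (n : ℕ) (H : Subgroup (F n)) : ℝ :=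
  sInf {r : ℝ | ∃ A : Finset (Cosets n H), A.Nonempty ∧
    r = (boundaryCard A : ℝ) / (2 * n * A.card)}

/-- The bottom of the spectrum of the discrete Laplacian on `Γ_H`, as the infimum of
Rayleigh quotients of finitely supported nonzero functions. -/
def lambdaZero (n : ℕ) (H : Subgroup (F n)) : ℝ :=
  sInf {r : ℝ | ∃ f : Cosets n H → ℝ, (Function.support f).Finite ∧ f ≠ 0 ∧
    r = (∑ᶠ x, ∑ i : Fin n, (f x - f (rmul x (FreeGroup.of i))) ^ 2) /
        (2 * n * ∑ᶠ x, (f x) ^ 2)}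

/-- The transition operator of the simple random walk on `Γ_H`. -/
def transOp {n : ℕ} {H : Subgroup (F n)} (f : Cosets n H → ℝ) (x : Cosets n H) : ℝ :=
  (1 / (2 * n)) * ∑ p : Fin n × Bool, f (rmul x (sgen p))

/-- The spectral radius of the transition operator `P` of the simple random walk on
`Γ_N`: since `P` is bounded and self-adjoint on `ℓ²`, its spectral radius equals its
operator norm, i.e. the supremum of `‖Pf‖/‖f‖` over finitely supported nonzero `f`. -/
def specRad (n : ℕ) (H : Subgroup (F n)) : ℝ :=
  sSup {r : ℝ | ∃ f : Cosets n H → ℝ, (Function.support f).Finite ∧ f ≠ 0 ∧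
    r = Real.sqrt (∑ᶠ x, (transOp f x) ^ 2) / Real.sqrt (∑ᶠ x, (f x) ^ 2)}

end JM

namespace FreeGroup

variable {α : Type*}

def letterInv (x : α × Bool) : α × Bool := (x.1, !x.2)

@[simp] theorem letterInv_letterInv (x : α × Bool) : letterInv (letterInv x) = x := by
  simp [letterInv]

theorem letterInv_injective : Function.Injective (letterInv (α := α)) :=
  Function.LeftInverse.injective letterInv_letterInv

theorem ne_letterInv_comm {x y : α × Bool} : x ≠ letterInv y ↔ y ≠ letterInv x := by
  rw [← letterInv_injective.ne_iff, letterInv_letterInv, ne_comm]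

theorem invRev_eq_reverse_map (L : List (α × Bool)) : invRev L = (L.map letterInv).reverse :=
  rfl

theorem head?_invRev (L : List (α × Bool)) : (invRev L).head? = L.getLast?.map letterInv := by
  rw [invRev_eq_reverse_map, List.head?_reverse, List.getLast?_map]

theorem getLast?_invRev (L : List (α × Bool)) : (invRev L).getLast? = L.head?.map letterInv := by
  rw [invRev_eq_reverse_map, List.getLast?_reverse, List.head?_map]

theorem isReduced_append {L₁ L₂ : List (α × Bool)} :
    IsReduced (L₁ ++ L₂) ↔ IsReduced L₁ ∧ IsReduced L₂ ∧
      ∀ x ∈ L₁.getLast?, ∀ y ∈ L₂.head?, y ≠ letterInv x := by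
  have hrel : ∀ x y : α × Bool, (x.1 = y.1 → x.2 = y.2) ↔ y ≠ letterInv x := by
    rintro ⟨x₁, x₂⟩ ⟨y₁, y₂⟩
    cases x₂ <;> cases y₂ <;> simp [letterInv, eq_comm]
  simp only [IsReduced, List.isChain_append, hrel]

theorem IsReduced.append {L₁ L₂ : List (α × Bool)} (h₁ : IsReduced L₁) (h₂ : IsReduced L₂)
    (h : ∀ x ∈ L₁.getLast?, ∀ y ∈ L₂.head?, y ≠ letterInv x) : IsReduced (L₁ ++ L₂) :=
  isReduced_append.2 ⟨h₁, h₂, h⟩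

variable [DecidableEq α] {L : List (α × Bool)}

theorem IsReduced.invRev (h : IsReduced L) : IsReduced (invRev L) := by
  apply IsReduced.of_reduce_eq
  rw [reduce_invRev, h.reduce_eq]

theorem IsReduced.toWord_mk (h : IsReduced L) : (mk L).toWord = L := by
  rw [FreeGroup.toWord_mk, h.reduce_eq]

theorem IsReduced.norm_mk (h : IsReduced L) : (mk L).norm = L.length := by
  rw [norm, h.toWord_mk]

theorem injective_getElem?_toWord (P : FreeGroup α → Prop) (R : ℕ) :
    Function.Injective
      fun g : {g // P g ∧ g.norm ≤ R} => fun i : Fin (R + 1) => g.1.toWord[i]? := by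
  intro g g' h
  refine Subtype.ext (toWord_injective (List.ext_getElem? fun i => ?_))
  by_cases hi : i < R + 1
  · exact congrFun h ⟨i, hi⟩
  · have hg := g.2.2
    have hg' := g'.2.2
    rw [norm] at hg hg'
    rw [List.getElem?_eq_none (by omega), List.getElem?_eq_none (by omega)]

variable [Fintype α]

instance (P : FreeGroup α → Prop) (R : ℕ) : Finite {g // P g ∧ g.norm ≤ R} :=
  .of_injective _ (injective_getElem?_toWord P R)

theorem card_norm_le_le_pow (P : FreeGroup α → Prop) (R : ℕ) :
    Nat.card {g // P g ∧ g.norm ≤ R} ≤ (2 * Fintype.card α + 1) ^ (R + 1) := by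
  have := Nat.card_le_card_of_injective _ (injective_getElem?_toWord P R)
  simpa [Nat.card_eq_fintype_card, mul_comm] using this

end FreeGroup

theorem List.flatMap_injective_of_length_eq {β γ : Type*} {f : β → List γ}
    (hf : Function.Injective f) {c : ℕ} (hc : ∀ x, (f x).length = c) :
    ∀ {xs ys : List β}, xs.length = ys.length → xs.flatMap f = ys.flatMap f → xs = ys
  | [], [], _, _ => rfl
  | x :: xs, y :: ys, hlen, h => by
    rw [List.flatMap_cons, List.flatMap_cons] at h
    obtain ⟨hxy, hrest⟩ := List.append_inj h (by rw [hc, hc])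
    rw [hf hxy, List.flatMap_injective_of_length_eq hf hc (by simpa using hlen) hrest]

namespace JM

open FreeGroup

section Segments

variable {α : Type*} {Q : ℕ} (ι : α × Bool ≃ Fin (Q + 1))

def nextLetter (x : α × Bool) (t : Fin Q) : α × Bool :=
  ι.symm ((ι (letterInv x)).succAbove t)

theorem nextLetter_ne (x : α × Bool) (t : Fin Q) : nextLetter ι x t ≠ letterInv x := by
  rw [nextLetter, Ne, Equiv.symm_apply_eq]
  exact Fin.succAbove_ne _ t

theorem nextLetter_injective (x : α × Bool) : Function.Injective (nextLetter ι x) :=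
  ι.symm.injective.comp (Fin.succAbove_right_injective)

def chainWord : α × Bool → List (Fin Q) → List (α × Bool)
  | _, [] => []
  | x, t :: z => nextLetter ι x t :: chainWord (nextLetter ι x t) z

@[simp] theorem length_chainWord (x : α × Bool) (z : List (Fin Q)) :
    (chainWord ι x z).length = z.length := by
  induction z generalizing x <;> simp [chainWord, *]

theorem isReduced_cons_chainWord (x : α × Bool) (z : List (Fin Q)) :
    IsReduced (x :: chainWord ι x z) := by
  induction z generalizing x with
  | nil => exact .singleton
  | cons t z ih =>
    exact (IsReduced.singleton).append (ih _) (by simpa [chainWord] using nextLetter_ne ι x t)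

theorem chainWord_injective (x : α × Bool) : Function.Injective (chainWord ι x) := by
  intro z z' h
  induction z generalizing x z' with
  | nil => cases z' <;> simp_all [chainWord]
  | cons t z ih =>
    cases z' with
    | nil => simp [chainWord] at h
    | cons t' z' =>
      simp only [chainWord, List.cons.injEq] at h
      obtain rfl := nextLetter_injective ι x h.1
      rw [ih _ h.2]

variable [DecidableEq α] (a e p : α × Bool)

-- The letter before `p` is `a` or `e`, whichever does not cancel against its predecessor.
def segment (z : List (Fin Q)) : List (α × Bool) :=
  let last := (e :: chainWord ι e z).getLast (List.cons_ne_nil _ _)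
  e :: chainWord ι e z ++ [if letterInv last = a then e else a, p]

@[simp] theorem length_segment (z : List (Fin Q)) :
    (segment ι a e p z).length = z.length + 3 := by
  simp [segment]

theorem head?_segment (z : List (Fin Q)) : (segment ι a e p z).head? = some e := by
  simp [segment]

theorem getLast?_segment (z : List (Fin Q)) : (segment ι a e p z).getLast? = some p := by
  rw [segment, List.getLast?_append]
  rfl

theorem isReduced_segment (hea : e ≠ a) (hpa : p ≠ letterInv a) (hpe : p ≠ letterInv e)
    (z : List (Fin Q)) : IsReduced (segment ι a e p z) := by
  refine (isReduced_cons_chainWord ι e z).append (IsReduced.singleton.append .singleton ?_) ?_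
  · split_ifs <;> simpa
  · rw [List.getLast?_eq_some_getLast (List.cons_ne_nil _ _)]
    simp only [List.head?_cons, Option.mem_def, Option.some.injEq]
    rintro _ rfl _ rfl
    split_ifs with h
    · exact h ▸ hea
    · exact Ne.symm h

theorem segment_injective : Function.Injective (segment ι a e p) := by
  intro z z' h
  have hlen : z.length = z'.length := by simpa using congrArg List.length h
  exact chainWord_injective ι e
    (List.cons_injective (List.append_inj h (by simp [hlen])).1)

end Segments

section Nested

variable {α : Type*} (l : List (α × Bool))

def nestedWord : List (List (α × Bool)) → List (α × Bool)
  | [] => []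
  | u :: us => u ++ (l ++ (nestedWord us ++ invRev u))

theorem mk_nestedWord_mem {N : Subgroup (FreeGroup α)} [hN : N.Normal] (hl : mk l ∈ N) :
    ∀ us, mk (nestedWord l us) ∈ N
  | [] => one_mem N
  | u :: us => by
    have := hN.conj_mem _ (mul_mem hl (mk_nestedWord_mem hl us)) (mk u)
    rw [nestedWord, ← mul_mk, ← mul_mk, ← mul_mk, ← inv_mk]
    simpa only [mul_assoc] using this

theorem nestedWord_eq (us : List (List (α × Bool))) :
    nestedWord l us = (us.map (· ++ l)).flatten ++ invRev us.flatten := by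
  induction us with
  | nil => rfl
  | cons u us ih => simp [nestedWord, ih, invRev_append]

theorem length_nestedWord (us : List (List (α × Bool))) :
    (nestedWord l us).length = 2 * us.flatten.length + us.length * l.length := by
  induction us with
  | nil => simp [nestedWord]
  | cons u us ih => simp [nestedWord, ih, invRev_length]; ring

variable {l} {a b e p : α × Bool}

theorem getLast?_nestedWord {us : List (List (α × Bool))}
    (hus : ∀ u ∈ us, u.head? = some e) :
    ∀ x ∈ (nestedWord l us).getLast?, x = letterInv e := by
  cases us with
  | nil => simp [nestedWord]
  | cons u us => simp [nestedWord, List.getLast?_append, getLast?_invRev, hus u (by simp)]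

theorem head?_nestedWord {us : List (List (α × Bool))} (hus : ∀ u ∈ us, u.head? = some e) :
    ∀ x ∈ (nestedWord l us).head?, x = e := by
  cases us with
  | nil => simp [nestedWord]
  | cons u us => simp [nestedWord, List.head?_append, hus u (by simp)]

theorem isReduced_nestedWord [DecidableEq α] (hl : IsReduced l) (hla : l.head? = some a)
    (hlb : l.getLast? = some b) (heb : e ≠ letterInv b) (hpa : p ≠ letterInv a) (hpb : p ≠ b)
    (hpe : p ≠ letterInv e) :
    ∀ us : List (List (α × Bool)),
      (∀ u ∈ us, IsReduced u ∧ u.head? = some e ∧ u.getLast? = some p) →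
        IsReduced (nestedWord l us)
  | [] => fun _ => .nil
  | u :: us => fun hus => by
    obtain ⟨hu, hue, hup⟩ := hus u (by simp)
    have hus' : ∀ v ∈ us, _ := fun v hv => hus v (List.mem_cons_of_mem u hv)
    refine hu.append (hl.append ((isReduced_nestedWord hl hla hlb heb hpa hpb hpe us hus').append
      hu.invRev ?_) ?_) ?_
    · intro x hx y hy
      rw [getLast?_nestedWord (fun v hv => (hus' v hv).2.1) x hx]
      simp only [head?_invRev, hup, Option.map_some, Option.mem_def, Option.some.injEq] at hy
      rw [← hy, letterInv_letterInv, ← letterInv_letterInv e, letterInv_injective.ne_iff]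
      exact hpe
    · simp only [hlb, List.head?_append, head?_invRev, hup, Option.map_some, Option.mem_def,
        Option.some.injEq]
      rintro _ rfl y hy
      rcases Option.or_eq_some_iff.1 hy with hW | ⟨-, hy⟩
      · rwa [head?_nestedWord (fun v hv => (hus' v hv).2.1) y hW]
      · rwa [← Option.some_inj.1 hy, letterInv_injective.ne_iff]
    · rw [hup, List.head?_append, hla, Option.some_or]
      simp only [Option.mem_def, Option.some.injEq]
      rintro _ rfl _ rfl
      rwa [ne_letterInv_comm]

end Nested

section Parsing

variable {α : Type*} {l : List (α × Bool)} {a e : α × Bool}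

theorem head?_flatten_of_forall_head? {us : List (List (α × Bool))}
    (hus : ∀ u ∈ us, u.head? = some e) : ∀ x ∈ us.flatten.head?, x = e := by
  cases us with
  | nil => simp
  | cons u us => simp [List.head?_append, hus u (by simp)]

theorem eq_nil_of_append_eq_of_append_eq (hea : e ≠ a) (hla : l.head? = some a)
    {t G G' F F' : List (α × Bool)} (hG : ∀ x ∈ G.head?, x = e) (h₁ : G = t ++ G')
    (h₂ : l ++ F = t ++ F') : t = [] := by
  cases t with
  | nil => rfl
  | cons x t =>
    cases l with
    | nil => simp at hla
    | cons y l =>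
      subst h₁
      simp only [List.head?_cons, Option.some.injEq] at hla
      simp only [List.cons_append, List.cons.injEq] at h₂
      simp only [List.cons_append, List.head?_cons, Option.mem_def, Option.some.injEq,
        forall_eq'] at hG
      exact absurd (hG.symm.trans (h₂.1.symm.trans hla)) hea

theorem eq_of_flatten_eq_of_flatten_map_append_eq (hea : e ≠ a) (hla : l.head? = some a) :
    ∀ {us us' : List (List (α × Bool))}, (∀ u ∈ us, u.head? = some e) →
      (∀ u ∈ us', u.head? = some e) → us.flatten = us'.flatten →
      (us.map (· ++ l)).flatten = (us'.map (· ++ l)).flatten → us = us'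
  | [], [], _, _, _, _ => rfl
  | [], u' :: _, _, hus', h, _ => by
    have hu' : u' = [] := List.append_eq_nil_iff.1 h.symm |>.1
    simpa [hu'] using hus' u' (by simp)
  | u :: _, [], hus, _, h, _ => by
    have hu : u = [] := List.append_eq_nil_iff.1 h |>.1
    simpa [hu] using hus u (by simp)
  | u :: us, u' :: us', hus, hus', h₁, h₂ => by
    simp only [List.flatten_cons, List.map_cons, List.append_assoc] at h₁ h₂
    have hG := head?_flatten_of_forall_head? fun v hv => hus v (List.mem_cons_of_mem u hv)
    have hG' := head?_flatten_of_forall_head? fun v hv => hus' v (List.mem_cons_of_mem u' hv)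
    obtain rfl : u = u' := by
      rcases List.append_eq_append_iff.1 h₂ with ⟨t, rfl, ht⟩ | ⟨t, rfl, ht⟩
      · rw [List.append_assoc, List.append_cancel_left_eq] at h₁
        rw [eq_nil_of_append_eq_of_append_eq hea hla hG h₁ ht, List.append_nil]
      · rw [List.append_assoc, List.append_cancel_left_eq] at h₁
        rw [eq_nil_of_append_eq_of_append_eq hea hla hG' h₁.symm ht, List.append_nil]
    rw [eq_of_flatten_eq_of_flatten_map_append_eq hea hla
      (fun v hv => hus v (List.mem_cons_of_mem u hv))
      (fun v hv => hus' v (List.mem_cons_of_mem u hv))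
      (List.append_cancel_left h₁) (List.append_cancel_left (List.append_cancel_left h₂))]

theorem eq_of_nestedWord_eq (hea : e ≠ a) (hla : l.head? = some a)
    {us us' : List (List (α × Bool))} (hus : ∀ u ∈ us, u.head? = some e)
    (hus' : ∀ u ∈ us', u.head? = some e) (hlen : us.flatten.length = us'.flatten.length)
    (h : nestedWord l us = nestedWord l us') : us = us' := by
  rw [nestedWord_eq, nestedWord_eq] at h
  obtain ⟨hmap, hinv⟩ := List.append_inj' h (by simp [invRev_length, hlen])
  exact eq_of_flatten_eq_of_flatten_map_append_eq hea hla hus hus' (invRev_injective hinv) hmap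

end Parsing

section Counting

variable {α : Type*} [DecidableEq α] {Q : ℕ} (ι : α × Bool ≃ Fin (Q + 1)) (a e p : α × Bool)
  {J : ℕ}

def splitSegments (d : Fin (J + 1) × (Fin J → Fin Q)) : List (List (α × Bool)) :=
  [segment ι a e p ((List.ofFn d.2).take d.1), segment ι a e p ((List.ofFn d.2).drop d.1)]

theorem splitSegments_injective : Function.Injective (splitSegments ι a e p (J := J)) := by
  rintro ⟨k, z⟩ ⟨k', z'⟩ h
  simp only [splitSegments, List.cons.injEq, and_true] at h
  have htake := segment_injective ι a e p h.1
  have hdrop := segment_injective ι a e p h.2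
  have hk : k = k' := Fin.ext (by simpa [k.is_le, k'.is_le] using congrArg List.length htake)
  have hz : List.ofFn z = List.ofFn z' := by
    rw [← List.take_append_drop k (List.ofFn z), htake, hdrop, List.take_append_drop]
  rw [hk, List.ofFn_injective hz]

theorem length_flatten_splitSegments (d : Fin (J + 1) × (Fin J → Fin Q)) :
    (splitSegments ι a e p d).flatten.length = J + 6 := by
  simp [splitSegments]
  omega

def blockSegments {s : ℕ} (D : Fin s → Fin (J + 1) × (Fin J → Fin Q)) :
    List (List (α × Bool)) :=
  (List.ofFn D).flatMap (splitSegments ι a e p)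

theorem blockSegments_injective (s : ℕ) :
    Function.Injective (blockSegments ι a e p (J := J) (s := s)) := fun _ _ h =>
  List.ofFn_injective (List.flatMap_injective_of_length_eq (splitSegments_injective ι a e p)
    (c := 2) (fun _ => rfl) (by simp) h)

section

variable {s : ℕ} (D : Fin s → Fin (J + 1) × (Fin J → Fin Q))

theorem length_blockSegments : (blockSegments ι a e p D).length = 2 * s := by
  simp [blockSegments, List.length_flatMap, splitSegments, List.sum_ofFn, mul_comm]

theorem length_flatten_blockSegments :
    (blockSegments ι a e p D).flatten.length = s * (J + 6) := by
  simp only [blockSegments, List.flatMap_def, List.flatten_flatten, List.length_flatten,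
    List.map_ofFn]
  simp only [Function.comp_def, length_flatten_splitSegments, List.sum_ofFn, Finset.sum_const,
    Finset.card_univ, Fintype.card_fin, smul_eq_mul]

theorem forall_mem_blockSegments (hea : e ≠ a) (hpa : p ≠ letterInv a) (hpe : p ≠ letterInv e) :
    ∀ u ∈ blockSegments ι a e p D, IsReduced u ∧ u.head? = some e ∧ u.getLast? = some p := by
  simp only [blockSegments, splitSegments, List.mem_flatMap, List.mem_cons, List.not_mem_nil,
    or_false]
  rintro u ⟨d, -, rfl | rfl⟩ <;>
    exact ⟨isReduced_segment ι a e p hea hpa hpe _, head?_segment .., getLast?_segment ..⟩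

end

variable {l : List (α × Bool)} {b : α × Bool}

theorem pow_le_card_norm_le_of_mk_mem [Fintype α] (hQ : Fintype.card (α × Bool) = Q + 1)
    {N : Subgroup (FreeGroup α)} [N.Normal] (hlN : mk l ∈ N) (hl : IsReduced l)
    (hla : l.head? = some a) (hlb : l.getLast? = some b) (hea : e ≠ a) (heb : e ≠ letterInv b)
    (hpa : p ≠ letterInv a) (hpb : p ≠ b) (hpe : p ≠ letterInv e) (s : ℕ) :
    ((J + 1) * Q ^ J) ^ s ≤
      Nat.card {g : FreeGroup α // g ∈ N ∧ g.norm ≤ 2 * s * (J + 6 + l.length)} := by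
  let ι := Fintype.equivFinOfCardEq hQ
  have hsegs D := forall_mem_blockSegments ι a e p (s := s) (J := J) D hea hpa hpe
  have hred D := isReduced_nestedWord hl hla hlb heb hpa hpb hpe _ (hsegs D)
  have hlength (D : Fin s → Fin (J + 1) × (Fin J → Fin Q)) :
      (nestedWord l (blockSegments ι a e p D)).length = 2 * s * (J + 6 + l.length) := by
    rw [length_nestedWord, length_blockSegments, length_flatten_blockSegments]
    ring
  let E D : {g : FreeGroup α // g ∈ N ∧ g.norm ≤ 2 * s * (J + 6 + l.length)} :=
    ⟨mk (nestedWord l (blockSegments ι a e p D)), mk_nestedWord_mem l hlN _,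
      by rw [(hred D).norm_mk, hlength]⟩
  have hE : Function.Injective E := by
    intro D D' h
    have h' := congrArg (fun g => (Subtype.val g).toWord) h
    simp only [E, (hred _).toWord_mk] at h'
    refine blockSegments_injective ι a e p s (eq_of_nestedWord_eq hea hla
      (fun u hu => (hsegs D u hu).2.1) (fun u hu => (hsegs D' u hu).2.1) ?_ h')
    rw [length_flatten_blockSegments, length_flatten_blockSegments]
  simpa using Nat.card_le_card_of_injective E hE

end Counting

section Growth

variable {α : Type*} [Fintype α] [DecidableEq α]

theorem exists_letter_ne (hα : 2 ≤ Fintype.card α) (x y z : α × Bool) :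
    ∃ c, c ≠ x ∧ c ≠ y ∧ c ≠ z := by
  obtain ⟨c, -, hc⟩ := Finset.exists_mem_notMem_of_card_lt_card (s := {x, y, z})
    (t := Finset.univ) (Finset.card_le_three.trans_lt (by simp; omega))
  simp only [Finset.mem_insert, Finset.mem_singleton, not_or] at hc
  exact ⟨c, hc⟩

theorem exists_pow_le_card_norm_le (hα : 2 ≤ Fintype.card α) {N : Subgroup (FreeGroup α)}
    [N.Normal] (hN : N ≠ ⊥) : ∃ K : ℕ, 0 < K ∧ ∀ s : ℕ,
      (2 * Fintype.card α - 1) ^ (s * (K + 1)) ≤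
        Nat.card {g : FreeGroup α // g ∈ N ∧ g.norm ≤ 2 * K * s} := by
  obtain ⟨w, hwN, hw⟩ := N.bot_or_exists_ne_one.resolve_left hN
  have hl : w.toWord ≠ [] := by rwa [Ne, toWord_eq_nil_iff]
  set a := w.toWord.head hl
  set b := w.toWord.getLast hl
  obtain ⟨e, hea, heb, -⟩ := exists_letter_ne hα a (letterInv b) (letterInv b)
  obtain ⟨p, hpa, hpb, hpe⟩ := exists_letter_ne hα (letterInv a) b (letterInv e)
  set Q := 2 * Fintype.card α - 1
  set J := Q ^ (w.toWord.length + 7)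
  refine ⟨J + 6 + w.toWord.length, by omega, fun s => ?_⟩
  calc Q ^ (s * (J + 6 + w.toWord.length + 1)) = (Q ^ (w.toWord.length + 7) * Q ^ J) ^ s := by
        rw [← pow_add, ← pow_mul]; ring_nf
    _ ≤ ((J + 1) * Q ^ J) ^ s := by gcongr; omega
    _ ≤ _ := by
      rw [mul_right_comm]
      exact pow_le_card_norm_le_of_mk_mem a e p (by simp; omega) (by rwa [mk_toWord])
        isReduced_toWord (List.head?_eq_some_head hl) (List.getLast?_eq_some_getLast hl)
        hea heb hpa hpb hpe s

theorem isBoundedUnder_log_card_norm_le (P : FreeGroup α → Prop) :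
    IsBoundedUnder (· ≤ ·) atTop
      fun R : ℕ => Real.log (Nat.card {g // P g ∧ g.norm ≤ R}) / R := by
  set c : ℝ := Real.log (2 * Fintype.card α + 1)
  refine isBoundedUnder_of_eventually_le (a := 2 * c) ?_
  filter_upwards [eventually_ge_atTop 1] with R hR
  have hR' : (1 : ℝ) ≤ R := by exact_mod_cast hR
  have hc : 0 ≤ c := Real.log_nonneg (le_add_of_nonneg_left (by positivity))
  have hlog : Real.log (Nat.card {g // P g ∧ g.norm ≤ R}) ≤ (R + 1) * c := by
    rcases Nat.eq_zero_or_pos (Nat.card {g // P g ∧ g.norm ≤ R}) with h | h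
    · rw [h, Nat.cast_zero, Real.log_zero]
      positivity
    · calc _ ≤ Real.log (((2 * Fintype.card α + 1) ^ (R + 1) : ℕ) : ℝ) :=
            Real.log_le_log (by exact_mod_cast h) (by exact_mod_cast card_norm_le_le_pow P R)
        _ = (R + 1) * c := by push_cast; rw [Real.log_pow]; push_cast; ring
  rw [div_le_iff₀ (by positivity)]
  nlinarith

theorem lt_limsup_log_card_norm_le (hα : 2 ≤ Fintype.card α) {N : Subgroup (FreeGroup α)}
    [N.Normal] (hN : N ≠ ⊥) :
    Real.log (2 * Fintype.card α - 1) / 2 <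
      limsup (fun R : ℕ => Real.log (Nat.card {g // g ∈ N ∧ g.norm ≤ R}) / R) atTop := by
  obtain ⟨K, hK, hcount⟩ := exists_pow_le_card_norm_le hα hN
  set Q := 2 * Fintype.card α - 1 with hQ
  have hQcast : (Q : ℝ) = 2 * Fintype.card α - 1 := by
    rw [hQ, Nat.cast_sub (by omega)]; push_cast; ring
  have hlogQ : 0 < Real.log Q := Real.log_pos (by exact_mod_cast (by omega : 1 < Q))
  rw [← hQcast]
  calc Real.log Q / 2 < (K + 1) / (2 * K) * Real.log Q := by
        rw [div_mul_eq_mul_div, lt_div_iff₀ (by positivity)]; nlinarith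
    _ ≤ _ := by
      refine le_limsup_of_frequently_le ?_ (isBoundedUnder_log_card_norm_le _)
      refine (tendsto_id.const_mul_atTop' (by positivity : 0 < 2 * K)).frequently
        (Eventually.frequently ?_)
      filter_upwards [eventually_ge_atTop 1] with s hs
      rw [id, le_div_iff₀ (by positivity)]
      calc (K + 1) / (2 * K) * Real.log Q * ((2 * K * s : ℕ) : ℝ)
          = ((s * (K + 1) : ℕ) : ℝ) * Real.log Q := by push_cast; field_simp
        _ = Real.log ((Q ^ (s * (K + 1)) : ℕ) : ℝ) := by rw [Nat.cast_pow, Real.log_pow]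
        _ ≤ _ := Real.log_le_log (by exact_mod_cast pow_pos (by omega) _)
          (by exact_mod_cast hcount s)

end Growth

/-- For every non-trivial normal subgroup `N ⊴ F_n` (`n ≥ 2`) one has
`δ(N) > (1/2)·log(2n−1)`, i.e. the cogrowth `δ(N)/log(2n−1)` is `> 1/2`. -/
theorem stmt2 (n : ℕ) (hn : 2 ≤ n) (N : Subgroup (F n)) [N.Normal] (hN : N ≠ ⊥) :
    poincareExponent n N > Real.log (2 * n - 1) / 2 := by
  have h := lt_limsup_log_card_norm_le (α := Fin n) (by simpa using hn) hN
  rwa [Fintype.card_fin] at h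

end JM
end
end

section
/- (Cheeger-type inequality of Mohar) Let n ≥ 2 and let H be a subgroup of the free group F_n. Then the isoperimetric constant and the bottom of the spectrum of the discrete Laplacian of the quotient graph Γ_H = T_n/H satisfy i(Γ_H) ≤ √(1 − (1 − λ₀(Γ_H))²). -/
/-!
Mohar's argument. Summing over directed edges `x → xs` of `Γ_H` (each edge of the graph counted
twice), a coarea inequality holds: for `g ≥ 0` of finite support,
`∑ |g x - g (xs)| ≥ 4n · i(Γ_H) · ∑ g`. It follows by induction on the support, peeling off the
bottom layer: `g = h + m · 1_A` with `A = supp g`, `m = min_A g` and `supp h ⊊ A` adds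
`2m · |∂A|` to the edge sum and `m · |A|` to `∑ g`, and `2 |∂A| ≥ 4n · i · |A|`.

Apply it to `g = f²`. Since `|f x² - f y²| = |f x - f y| · |f x + f y|`, Cauchy–Schwarz and the
parallelogram identity `∑ (f x + f y)² = 8n ‖f‖² - ∑ (f x - f y)²` give `i² ≤ R (2 - R)` for the
Rayleigh quotient `R` of every `f`. As `R (2 - R) = 1 - (1 - R)²` is continuous in `R`, the bound
passes to the infimum `λ₀`.
-/

open Filter Real

noncomputable section

namespace JM

open Function

lemma abs_sub_add_indicator {α : Type*} {s : Set α} {h : α → ℝ} (h0 : 0 ≤ h)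
    (hs : support h ⊆ s) {m : ℝ} (hm : 0 ≤ m) (x y : α) :
    |(h x + m * s.indicator 1 x) - (h y + m * s.indicator 1 y)| =
      |h x - h y| + m * |s.indicator 1 x - s.indicator (1 : α → ℝ) y| := by
  have hx0 : 0 ≤ h x := h0 x
  have hy0 : 0 ≤ h y := h0 y
  by_cases hx : x ∈ s <;> by_cases hy : y ∈ s
  · simp [hx, hy]
  · simp [hx, hy, notMem_support.mp (mt (@hs y) hy), abs_of_nonneg hx0,
      abs_of_nonneg (add_nonneg hx0 hm)]
  · simp [hx, hy, notMem_support.mp (mt (@hs x) hx), abs_of_nonneg hy0]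
    rw [abs_of_nonpos (by linarith)]
    ring
  · simp [hx, hy, notMem_support.mp (mt (@hs x) hx), notMem_support.mp (mt (@hs y) hy)]

lemma finsum_mul_sq_le_sq_mul_sq {α : Type*} {u v : α → ℝ} (hu : u.HasFiniteSupport)
    (hv : v.HasFiniteSupport) :
    (∑ᶠ a, u a * v a) ^ 2 ≤ (∑ᶠ a, u a ^ 2) * ∑ᶠ a, v a ^ 2 := by
  classical
  set s := (hu.union hv).toFinset
  have hus : support u ⊆ s := (hu.union hv).coe_toFinset ▸ Set.subset_union_left
  have hvs : support v ⊆ s := (hu.union hv).coe_toFinset ▸ Set.subset_union_right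
  rw [finsum_eq_finsetSum_of_support_subset _ ((support_mul_subset_left _ _).trans hus),
    finsum_eq_finsetSum_of_support_subset _ ((support_pow u two_ne_zero).subset.trans hus),
    finsum_eq_finsetSum_of_support_subset _ ((support_pow v two_ne_zero).subset.trans hvs)]
  exact Finset.sum_mul_sq_le_sq_mul_sq _ _ _

section

variable {n : ℕ} {H : Subgroup (F n)}

lemma rmul_rmul (x : Cosets n H) (a b : F n) : rmul (rmul x a) b = rmul x (a * b) := by
  induction x using Quotient.inductionOn with
  | h g => exact congrArg _ (mul_assoc g a b)

lemma rmul_one (x : Cosets n H) : rmul x 1 = x := by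
  induction x using Quotient.inductionOn with
  | h g => exact congrArg _ (mul_one g)

lemma sgen_not (p : Fin n × Bool) : sgen (p.1, !p.2) = (sgen p)⁻¹ := by
  rcases p with ⟨i, _ | _⟩ <;> simp [sgen]

variable (n H) in
/-- `(x, p)` is the edge from `x` to `x · sgen p`. -/
abbrev DirEdge := Cosets n H × (Fin n × Bool)

def target (e : DirEdge n H) : Cosets n H := rmul e.1 (sgen e.2)

def reverse (e : DirEdge n H) : DirEdge n H := (target e, (e.2.1, !e.2.2))

lemma reverse_fst (e : DirEdge n H) : (reverse e).1 = target e := rfl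

lemma target_reverse (e : DirEdge n H) : target (reverse e) = e.1 := by
  simp only [target, reverse, rmul_rmul, sgen_not, mul_inv_cancel, rmul_one]

lemma reverse_involutive : Involutive (reverse : DirEdge n H → DirEdge n H) := by
  rintro ⟨x, i, b⟩
  exact Prod.ext (target_reverse _) (by simp [reverse])

lemma finsum_comp_reverse (φ : DirEdge n H → ℝ) : ∑ᶠ e, φ (reverse e) = ∑ᶠ e, φ e :=
  finsum_comp_equiv reverse_involutive.toPerm

lemma finsum_target_eq_finsum_fst (f : Cosets n H → ℝ) :
    ∑ᶠ e : DirEdge n H, f (target e) = ∑ᶠ e : DirEdge n H, f e.1 := by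
  simpa only [target_reverse] using (finsum_comp_reverse fun e => f (target e)).symm

lemma finsum_add_comp_reverse (φ : DirEdge n H → ℝ) (hφ : φ.HasFiniteSupport) :
    ∑ᶠ e, (φ e + φ (reverse e)) = 2 * ∑ᶠ e, φ e := by
  rw [finsum_add_distrib (g := fun e => φ (reverse e)) hφ
    (hφ.comp_of_injective (g := reverse) reverse_involutive.injective), finsum_comp_reverse]
  ring

lemma hasFiniteSupport_fst {f : Cosets n H → ℝ} (hf : f.HasFiniteSupport) :
    HasFiniteSupport fun e : DirEdge n H => f e.1 :=
  (hf.prod Set.finite_univ).subset fun _ he => ⟨he, trivial⟩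

lemma hasFiniteSupport_target {f : Cosets n H → ℝ} (hf : f.HasFiniteSupport) :
    HasFiniteSupport fun e : DirEdge n H => f (target e) :=
  (hasFiniteSupport_fst hf).comp_of_injective (g := reverse) reverse_involutive.injective

lemma hasFiniteSupport_edge {f : Cosets n H → ℝ} (hf : f.HasFiniteSupport) {φ : ℝ → ℝ → ℝ}
    (hφ : φ 0 0 = 0) : HasFiniteSupport fun e : DirEdge n H => φ (f e.1) (f (target e)) :=
  ((hasFiniteSupport_fst hf).union (hasFiniteSupport_target hf)).subset fun e he => by
    by_contra h
    simp_all [not_or]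

lemma finsum_dirEdge_eq_finsum_sum (φ : DirEdge n H → ℝ) (hφ : φ.HasFiniteSupport) :
    ∑ᶠ e, φ e = ∑ᶠ x, ∑ p, φ (x, p) := by
  simp only [finsum_curry φ hφ, finsum_eq_sum_of_fintype]

lemma finsum_dirEdge_fst {f : Cosets n H → ℝ} (hf : f.HasFiniteSupport) :
    ∑ᶠ e : DirEdge n H, f e.1 = 2 * n * ∑ᶠ x, f x := by
  rw [finsum_dirEdge_eq_finsum_sum _ (hasFiniteSupport_fst hf), mul_finsum]
  simp only [Finset.sum_const, Finset.card_univ, Fintype.card_prod, Fintype.card_fin,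
    Fintype.card_bool, nsmul_eq_mul]
  exact finsum_congr fun x => by push_cast; ring

lemma finsum_dirEdge_eq_two_mul_of_reverse (φ : DirEdge n H → ℝ) (hφ : φ.HasFiniteSupport)
    (hrev : ∀ e, φ (reverse e) = φ e) :
    ∑ᶠ e, φ e = 2 * ∑ᶠ x, ∑ i : Fin n, φ (x, (i, true)) := by
  have hpos : HasFiniteSupport fun e : DirEdge n H => if e.2.2 then φ e else 0 :=
    hφ.subset fun e he => by by_contra h; simp_all
  have hsplit : ∀ e, φ e = (if e.2.2 then φ e else 0) +
      (if (reverse e).2.2 then φ (reverse e) else 0) := by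
    rintro ⟨x, i, _ | _⟩
    · simpa [reverse] using (hrev (x, i, false)).symm
    · simp [reverse]
  rw [finsum_congr hsplit, finsum_add_comp_reverse _ hpos, finsum_dirEdge_eq_finsum_sum _ hpos]
  simp [Fintype.sum_prod_type]

open Classical in
lemma boundaryCard_eq_finsum (A : Finset (Cosets n H)) :
    (boundaryCard A : ℝ) = ∑ᶠ e : DirEdge n H, if e.1 ∈ A ∧ target e ∉ A then 1 else 0 := by
  rw [finsum_eq_finsetSum_of_support_subset _ (s := A ×ˢ Finset.univ) ?_, Finset.sum_boole]
  · rw [boundaryCard, ← Nat.card_eq_finsetCard]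
    exact congrArg _ (Nat.card_congr (Equiv.subtypeEquivRight fun e => by
      rw [Finset.mem_filter]; simp [target]))
  · intro e he
    simp_all

lemma finsum_abs_sub_indicator (A : Finset (Cosets n H)) :
    ∑ᶠ e : DirEdge n H, |(A : Set (Cosets n H)).indicator (1 : Cosets n H → ℝ) e.1 -
      (A : Set (Cosets n H)).indicator 1 (target e)| = 2 * boundaryCard A := by
  classical
  have hsplit : ∀ e : DirEdge n H, |(A : Set (Cosets n H)).indicator (1 : Cosets n H → ℝ) e.1 -
      (A : Set (Cosets n H)).indicator 1 (target e)| =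
      (if e.1 ∈ A ∧ target e ∉ A then 1 else 0) +
        if (reverse e).1 ∈ A ∧ target (reverse e) ∉ A then 1 else 0 := by
    intro e
    rw [reverse_fst, target_reverse]
    by_cases h1 : e.1 ∈ A <;> by_cases h2 : target e ∈ A <;> simp [h1, h2]
  have hfin : HasFiniteSupport fun e : DirEdge n H =>
      if e.1 ∈ A ∧ target e ∉ A then (1 : ℝ) else 0 :=
    (hasFiniteSupport_fst (f := fun x => if x ∈ A then (1 : ℝ) else 0)
      (A.finite_toSet.subset fun x hx => by by_contra h; simp_all)).subset
      fun e he => by by_contra h; simp_all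
  rw [finsum_congr hsplit, finsum_add_comp_reverse _ hfin, ← boundaryCard_eq_finsum]

lemma finsum_indicator_one (A : Finset (Cosets n H)) :
    ∑ᶠ x, (A : Set (Cosets n H)).indicator (1 : Cosets n H → ℝ) x = A.card := by
  rw [← finsum_mem_def, finsum_mem_coe_finset]
  simp

lemma isoConst_nonneg : 0 ≤ isoConst n H :=
  Real.sInf_nonneg (by rintro _ ⟨A, -, rfl⟩; positivity)

lemma isoConst_mul_le_boundaryCard (hn : 0 < n) {A : Finset (Cosets n H)} (hA : A.Nonempty) :
    2 * n * A.card * isoConst n H ≤ boundaryCard A := by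
  have hpos : (0 : ℝ) < 2 * n * A.card := by positivity
  rw [mul_comm, ← le_div_iff₀ hpos]
  exact csInf_le ⟨0, by rintro _ ⟨B, -, rfl⟩; positivity⟩ ⟨A, hA, rfl⟩

lemma four_mul_isoConst_mul_finsum_add_indicator_le (hn : 0 < n) {A : Finset (Cosets n H)}
    (hA : A.Nonempty) {h : Cosets n H → ℝ} (h0 : 0 ≤ h) (hhA : support h ⊆ A) {m : ℝ}
    (hm : 0 ≤ m)
    (ih : 4 * n * isoConst n H * ∑ᶠ x, h x ≤ ∑ᶠ e : DirEdge n H, |h e.1 - h (target e)|) :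
    4 * n * isoConst n H * ∑ᶠ x, (h x + m * (A : Set (Cosets n H)).indicator 1 x) ≤
      ∑ᶠ e : DirEdge n H, |(h e.1 + m * (A : Set (Cosets n H)).indicator 1 e.1) -
        (h (target e) + m * (A : Set (Cosets n H)).indicator 1 (target e))| := by
  have hh : h.HasFiniteSupport := A.finite_toSet.subset hhA
  have hχ : HasFiniteSupport ((A : Set (Cosets n H)).indicator (1 : Cosets n H → ℝ)) :=
    A.finite_toSet.subset Set.support_indicator_subset
  rw [finsum_add_distrib hh (hχ.subset (support_mul_subset_right _ _)), ← mul_finsum,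
    finsum_indicator_one]
  simp only [abs_sub_add_indicator h0 hhA hm]
  rw [finsum_add_distrib (hasFiniteSupport_edge hh (φ := fun a b => |a - b|) (by simp))
    (hasFiniteSupport_edge hχ (φ := fun a b => m * |a - b|) (by simp)), ← mul_finsum,
    finsum_abs_sub_indicator]
  nlinarith [mul_le_mul_of_nonneg_left (isoConst_mul_le_boundaryCard (H := H) hn hA) hm]

theorem four_mul_isoConst_mul_finsum_le (hn : 0 < n) {g : Cosets n H → ℝ}
    (hg : g.HasFiniteSupport) (hg0 : 0 ≤ g) :
    4 * n * isoConst n H * ∑ᶠ x, g x ≤ ∑ᶠ e : DirEdge n H, |g e.1 - g (target e)| := by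
  classical
  suffices ∀ s : Finset (Cosets n H), ∀ g : Cosets n H → ℝ, 0 ≤ g → support g ⊆ s →
      4 * n * isoConst n H * ∑ᶠ x, g x ≤ ∑ᶠ e : DirEdge n H, |g e.1 - g (target e)| from
    this hg.toFinset g hg0 hg.coe_toFinset.ge
  intro s
  induction s using Finset.strongInduction with
  | H s ih =>
  intro g hg0 hgs
  by_cases hg : g = 0
  · simp [hg]
  set A := s.filter (g · ≠ 0)
  have hA : (A : Set (Cosets n H)) = support g := by
    ext x; simpa [A] using fun hx => hgs hx
  have hAne : A.Nonempty := by
    obtain ⟨x, hx⟩ := Function.ne_iff.mp hg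
    exact ⟨x, by simpa [← Finset.mem_coe, hA] using hx⟩
  obtain ⟨x₀, hx₀, hmin⟩ := A.exists_min_image g hAne
  set h := fun x => g x - g x₀ * (A : Set (Cosets n H)).indicator 1 x
  have hgh : g = fun x => h x + g x₀ * (A : Set (Cosets n H)).indicator 1 x := by
    funext x; simp [h]
  have h0 : 0 ≤ h := fun x => by
    by_cases hx : x ∈ A
    · simpa [h, hx] using hmin x hx
    · simpa [h, hx] using hg0 x
  have hhA : support h ⊆ A.erase x₀ := by
    intro x hx
    have hxA : x ∈ A := by
      by_contra hxA
      have hgx : g x = 0 := by simpa [← Finset.mem_coe, hA] using hxA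
      exact hx (by simp [h, hxA, hgx])
    exact Finset.mem_erase.mpr ⟨fun hxx => hx (by simp [h, hxx, hx₀]), hxA⟩
  rw [hgh]
  exact four_mul_isoConst_mul_finsum_add_indicator_le hn hAne h0 (hhA.trans (by simp))
    (hg0 x₀) (ih _ ((A.erase_ssubset hx₀).trans_le (s.filter_subset _)) h h0 hhA)

lemma finsum_dirEdge_sq_sub {f : Cosets n H → ℝ} (hf : f.HasFiniteSupport) :
    ∑ᶠ e : DirEdge n H, (f e.1 - f (target e)) ^ 2 =
      2 * ∑ᶠ x, ∑ i : Fin n, (f x - f (rmul x (FreeGroup.of i))) ^ 2 :=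
  finsum_dirEdge_eq_two_mul_of_reverse _ (hasFiniteSupport_edge hf (φ := fun a b => (a - b) ^ 2) (by norm_num))
    fun e => by simp only [reverse_fst, target_reverse]; ring

lemma finsum_dirEdge_sq_add {f : Cosets n H → ℝ} (hf : f.HasFiniteSupport) :
    ∑ᶠ e : DirEdge n H, (f e.1 + f (target e)) ^ 2 =
      8 * n * ∑ᶠ x, f x ^ 2 - ∑ᶠ e : DirEdge n H, (f e.1 - f (target e)) ^ 2 := by
  have hf2 : HasFiniteSupport fun x => f x ^ 2 := hf.subset (support_pow f two_ne_zero).subset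
  have hpar : ∀ e : DirEdge n H, (f e.1 + f (target e)) ^ 2 =
      2 * f e.1 ^ 2 + 2 * f (target e) ^ 2 - (f e.1 - f (target e)) ^ 2 := fun e => by ring
  rw [finsum_congr hpar,
    finsum_sub_distrib (hasFiniteSupport_edge hf (φ := fun a b => 2 * a ^ 2 + 2 * b ^ 2) (by simp))
      (hasFiniteSupport_edge hf (φ := fun a b => (a - b) ^ 2) (by simp)),
    finsum_add_distrib (hasFiniteSupport_edge hf (φ := fun a _ => 2 * a ^ 2) (by simp))
      (hasFiniteSupport_edge hf (φ := fun _ b => 2 * b ^ 2) (by simp)),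
    ← mul_finsum, ← mul_finsum, finsum_target_eq_finsum_fst (fun x => f x ^ 2), finsum_dirEdge_fst hf2]
  ring

lemma sq_finsum_abs_sub_sq_le {f : Cosets n H → ℝ} (hf : f.HasFiniteSupport) :
    (∑ᶠ e : DirEdge n H, |f e.1 ^ 2 - f (target e) ^ 2|) ^ 2 ≤
      (∑ᶠ e : DirEdge n H, (f e.1 - f (target e)) ^ 2) *
        ∑ᶠ e : DirEdge n H, (f e.1 + f (target e)) ^ 2 := by
  have := finsum_mul_sq_le_sq_mul_sq (u := fun e : DirEdge n H => |f e.1 - f (target e)|)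
    (v := fun e => |f e.1 + f (target e)|)
    (hasFiniteSupport_edge hf (φ := fun a b => |a - b|) (by simp))
    (hasFiniteSupport_edge hf (φ := fun a b => |a + b|) (by simp))
  simp only [sq_abs] at this
  convert this using 4 with e
  rw [← abs_mul]
  ring_nf

def rayleighQuotient (f : Cosets n H → ℝ) : ℝ :=
  (∑ᶠ x, ∑ i : Fin n, (f x - f (rmul x (FreeGroup.of i))) ^ 2) / (2 * n * ∑ᶠ x, (f x) ^ 2)

lemma isoConst_sq_le_rayleighQuotient (hn : 0 < n) {f : Cosets n H → ℝ}
    (hf : f.HasFiniteSupport) (hf0 : f ≠ 0) :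
    isoConst n H ^ 2 ≤ 1 - (1 - rayleighQuotient f) ^ 2 := by
  set S := ∑ᶠ x, f x ^ 2
  set N := ∑ᶠ x, ∑ i : Fin n, (f x - f (rmul x (FreeGroup.of i))) ^ 2
  have hf2 : HasFiniteSupport fun x => f x ^ 2 := hf.subset (support_pow f two_ne_zero).subset
  have hS : 0 < S := by
    obtain ⟨x, hx⟩ := Function.ne_iff.mp hf0
    exact finsum_pos (fun x => sq_nonneg _) ⟨x, sq_pos_of_ne_zero hx⟩ hf2
  have hsq : (4 * n * isoConst n H * S) ^ 2 ≤ 2 * N * (8 * n * S - 2 * N) :=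
    calc (4 * n * isoConst n H * S) ^ 2
        ≤ (∑ᶠ e : DirEdge n H, |f e.1 ^ 2 - f (target e) ^ 2|) ^ 2 :=
          pow_le_pow_left₀ (mul_nonneg (mul_nonneg (by positivity) isoConst_nonneg) hS.le)
            (four_mul_isoConst_mul_finsum_le hn hf2 fun x => sq_nonneg (f x)) 2
      _ ≤ _ := sq_finsum_abs_sub_sq_le hf
      _ = 2 * N * (8 * n * S - 2 * N) := by rw [finsum_dirEdge_sq_add hf, finsum_dirEdge_sq_sub hf]
  have hD : 0 < 2 * n * S := by positivity
  calc isoConst n H ^ 2 = (4 * n * isoConst n H * S) ^ 2 / (4 * (2 * n * S) ^ 2) := by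
        field_simp; ring
    _ ≤ 2 * N * (8 * n * S - 2 * N) / (4 * (2 * n * S) ^ 2) := by gcongr
    _ = 1 - (1 - N / (2 * n * S)) ^ 2 := by field_simp; ring

lemma lambdaZero_mem_closure : lambdaZero n H ∈ closure
    {r | ∃ f : Cosets n H → ℝ, (support f).Finite ∧ f ≠ 0 ∧ r = rayleighQuotient f} := by
  classical
  refine csInf_mem_closure ⟨_, Pi.single (Quotient.mk _ 1) 1,
    (Set.finite_singleton _).subset Pi.support_single_subset, by simp, rfl⟩ ⟨0, ?_⟩
  rintro _ ⟨f, -, -, rfl⟩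
  have hS : 0 ≤ ∑ᶠ x, f x ^ 2 := finsum_nonneg fun x => sq_nonneg _
  exact div_nonneg (finsum_nonneg fun x => Finset.sum_nonneg fun i _ => sq_nonneg _)
    (by positivity)

end

/-- Cheeger-type inequality of Mohar: For every subgroup `H ≤ F_n`
(`n ≥ 2`), `i(Γ_H) ≤ √(1 − (1 − λ₀(Γ_H))²)`. -/
theorem stmt7 (n : ℕ) (hn : 2 ≤ n) (H : Subgroup (F n)) :
    isoConst n H ≤ Real.sqrt (1 - (1 - lambdaZero n H) ^ 2) := by
  have hclosed : IsClosed {r : ℝ | isoConst n H ^ 2 ≤ 1 - (1 - r) ^ 2} :=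
    isClosed_le continuous_const (by fun_prop)
  have hrayleigh : {r | ∃ f : Cosets n H → ℝ, (support f).Finite ∧ f ≠ 0 ∧
      r = rayleighQuotient f} ⊆ {r : ℝ | isoConst n H ^ 2 ≤ 1 - (1 - r) ^ 2} := by
    rintro _ ⟨f, hf, hf0, rfl⟩
    exact isoConst_sq_le_rayleighQuotient (by omega) hf hf0
  exact Real.le_sqrt_of_sq_le (hclosed.closure_subset_iff.mpr hrayleigh lambdaZero_mem_closure)

end JM
end
end

section
/- Let n ≥ 2 and let H be a subgroup of the free group F_n of infinite index. Then the isoperimetric constant of the quotient graph satisfies i(Γ_H) ≤ (n−1)/n = i(T_n). -/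
/-!
Take for `A` the ball of radius `R` about the base vertex `H` in `Γ_H`. Every vertex of `A` other
than `H` has a neighbour strictly closer to `H` (drop the last letter of a shortest representative),
so these parent edges form a spanning tree of `A`; counted in both directions they are
`2(|A| - 1)` of the `2n|A|` edges leaving vertices of `A`, so at most `2(n - 1)|A| + 2` edges leave
`A`, and `i(Γ_H) ≤ (n - 1)/n + 1/(n|A|)`. Infinite index makes `Γ_H` infinite, so `|A| → ∞` as
`R → ∞`.
-/

open Filter Real

noncomputable section

theorem FreeGroup.exists_norm_mul_mk_singleton_lt {α : Type*} [DecidableEq α]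
    {g : FreeGroup α} (hg : g ≠ 1) : ∃ a : α × Bool, (g * FreeGroup.mk [a]).norm < g.norm := by
  obtain ⟨l, b, hlb⟩ : ∃ l b, g.toWord = l ++ [b] := by
    simpa using (List.eq_nil_or_concat g.toWord).resolve_left (by simpa using hg)
  refine ⟨(b.1, !b.2), ?_⟩
  have hcancel : g * FreeGroup.mk [(b.1, !b.2)] = FreeGroup.mk l := by
    have hg : g = FreeGroup.mk l * FreeGroup.mk [b] := by
      rw [FreeGroup.mul_mk, ← hlb, FreeGroup.mk_toWord]
    have hinv : FreeGroup.mk [(b.1, !b.2)] = (FreeGroup.mk [b])⁻¹ := by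
      simp [FreeGroup.inv_mk, FreeGroup.invRev]
    rw [hinv, hg, mul_inv_cancel_right]
  calc (g * FreeGroup.mk [(b.1, !b.2)]).norm ≤ l.length := hcancel ▸ FreeGroup.norm_mk_le
    _ < g.norm := by simp [FreeGroup.norm, hlb]

namespace JM

open Finset Topology

section SchreierGraph

variable {n : ℕ} {H : Subgroup (F n)}

lemma rmul_mk (g a : F n) :
    rmul (Quotient.mk (QuotientGroup.rightRel H) g) a = Quotient.mk _ (g * a) := rfl

lemma sgen_eq_mk (p : Fin n × Bool) : sgen p = FreeGroup.mk [p] := by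
  obtain ⟨i, _ | _⟩ := p
  · simp [sgen, FreeGroup.of, FreeGroup.inv_mk, FreeGroup.invRev]
  · rfl

lemma rmul_sgen_rmul_sgen_flip (x : Cosets n H) (p : Fin n × Bool) :
    rmul (rmul x (sgen p)) (sgen (p.1, !p.2)) = x := by
  induction x using Quotient.ind with
  | _ g =>
    have hflip : sgen p * sgen (p.1, !p.2) = 1 := by
      obtain ⟨i, _ | _⟩ := p <;> simp [sgen]
    rw [rmul_mk, rmul_mk, mul_assoc, hflip, mul_one]

lemma exists_norm_eq_cosetDist (x : Cosets n H) :
    ∃ g : F n, Quotient.mk _ g = x ∧ g.norm = cosetDist x := by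
  obtain ⟨g, hg⟩ := x.exists_rep
  exact Nat.sInf_mem (s := FreeGroup.norm '' {g | Quotient.mk _ g = x}) ⟨g.norm, g, hg, rfl⟩

lemma cosetDist_mk_le (g : F n) :
    cosetDist (Quotient.mk (QuotientGroup.rightRel H) g) ≤ g.norm :=
  Nat.sInf_le ⟨g, rfl, rfl⟩

lemma exists_cosetDist_rmul_sgen_lt {x : Cosets n H} (hx : x ≠ Quotient.mk _ 1) :
    ∃ p, cosetDist (rmul x (sgen p)) < cosetDist x := by
  obtain ⟨g, rfl, hg⟩ := exists_norm_eq_cosetDist x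
  obtain ⟨p, hp⟩ := FreeGroup.exists_norm_mul_mk_singleton_lt (g := g) (by rintro rfl; exact hx rfl)
  refine ⟨p, ?_⟩
  rw [rmul_mk, ← hg, sgen_eq_mk]
  exact (cosetDist_mk_le _).trans_lt hp

section EdgeCount

variable [DecidableEq (Cosets n H)]

lemma boundaryCard_add_card_filter_mem (A : Finset (Cosets n H)) :
    boundaryCard A + #{q ∈ A ×ˢ univ | rmul q.1 (sgen q.2) ∈ A} = 2 * n * #A := by
  have hboundary : boundaryCard A = #{q ∈ A ×ˢ univ | rmul q.1 (sgen q.2) ∉ A} := by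
    rw [boundaryCard, ← Nat.card_eq_finsetCard]
    exact Nat.card_congr (Equiv.subtypeEquivRight fun q => by simp)
  rw [hboundary, add_comm, card_filter_add_card_filter_not, card_product, card_univ,
    Fintype.card_prod, Fintype.card_fin, Fintype.card_bool]
  ring

lemma two_mul_card_sub_one_le_card_filter_mem (A : Finset (Cosets n H)) {x₀ : Cosets n H}
    (hx₀ : x₀ ∈ A) (d : Cosets n H → ℕ)
    (hd : ∀ x ∈ A, x ≠ x₀ → ∃ p, rmul x (sgen p) ∈ A ∧ d (rmul x (sgen p)) < d x) :
    2 * (#A - 1) ≤ #{q ∈ A ×ˢ univ | rmul q.1 (sgen q.2) ∈ A} := by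
  by_cases hsmall : #A ≤ 1
  · simp [Nat.sub_eq_zero_of_le hsmall]
  obtain ⟨y, hyA, hy⟩ := exists_mem_ne (s := A) (by omega) x₀
  have : Nonempty (Fin n × Bool) := ⟨(hd y hyA hy).choose⟩
  choose! par hparA hpar_lt using hd
  -- Every `x ≠ x₀` gives the edge to its parent `x · sgen (par x)` and the reverse edge; since `d`
  -- drops along parent edges, no edge arises both ways.
  let edge : Cosets n H × Bool → Cosets n H × (Fin n × Bool) := fun q =>
    if q.2 then (q.1, par q.1) else (rmul q.1 (sgen (par q.1)), ((par q.1).1, !(par q.1).2))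
  have hcard : #(A.erase x₀ ×ˢ (univ : Finset Bool)) = 2 * (#A - 1) := by
    rw [card_product, card_erase_of_mem hx₀, card_univ, Fintype.card_bool, mul_comm]
  rw [← hcard]
  refine card_le_card_of_injOn edge ?_ ?_
  · rintro ⟨x, _ | _⟩ hx
    all_goals simp only [coe_product, Set.mem_prod, mem_coe, mem_erase] at hx
    all_goals simp [edge, hparA x hx.1.2 hx.1.1, rmul_sgen_rmul_sgen_flip, hx.1.2]
  · have hmixed : ∀ x ∈ A.erase x₀, ∀ y ∈ A.erase x₀, edge (x, true) ≠ edge (y, false) := by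
      intro x hx y hy h
      obtain ⟨rfl, hflip⟩ : x = rmul y (sgen (par y)) ∧ par x = ((par y).1, !(par y).2) := by
        simpa [edge] using h
      rw [mem_erase] at hx hy
      have hback : rmul (rmul y (sgen (par y))) (sgen (par (rmul y (sgen (par y))))) = y := by
        rw [hflip]; exact rmul_sgen_rmul_sgen_flip y (par y)
      have hdown := hpar_lt y hy.2 hy.1
      have hup := hpar_lt _ hx.2 hx.1
      rw [hback] at hup
      omega
    rintro ⟨x, _ | _⟩ hx ⟨y, _ | _⟩ hy h
    all_goals simp only [coe_product, Set.mem_prod, mem_coe, mem_univ, and_true] at hx hy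
    · obtain ⟨hrmul, hpar⟩ : rmul x (sgen (par x)) = rmul y (sgen (par y)) ∧ par x = par y := by
        simpa [edge, Prod.ext_iff] using h
      rw [← rmul_sgen_rmul_sgen_flip x (par x), hrmul, hpar, rmul_sgen_rmul_sgen_flip]
    · exact absurd h.symm (hmixed y hy x hx)
    · exact absurd h (hmixed x hx y hy)
    · simpa [edge] using congrArg Prod.fst h

end EdgeCount

lemma finite_setOf_cosetDist_le (R : ℕ) : {x : Cosets n H | cosetDist x ≤ R}.Finite := by
  have hwords : {g : F n | g.norm ≤ R}.Finite :=
    ((List.finite_length_le (Fin n × Bool) R).preimage FreeGroup.toWord_injective.injOn).subset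
      fun g hg => hg
  refine (hwords.image (Quotient.mk _)).subset fun x hx => ?_
  obtain ⟨g, hg, hnorm⟩ := exists_norm_eq_cosetDist x
  exact ⟨g, hnorm.trans_le hx, hg⟩

variable (H) in
def ball (R : ℕ) : Finset (Cosets n H) := (finite_setOf_cosetDist_le R).toFinset

lemma mem_ball {R : ℕ} {x : Cosets n H} : x ∈ ball H R ↔ cosetDist x ≤ R :=
  Set.Finite.mem_toFinset _

lemma mk_one_mem_ball (R : ℕ) : Quotient.mk _ 1 ∈ ball H R :=
  mem_ball.2 <| (cosetDist_mk_le 1).trans (by simp)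

lemma ball_mono : Monotone (ball H) :=
  fun _ _ hRS _ hx => mem_ball.2 <| (mem_ball.1 hx).trans hRS

lemma exists_le_card_ball [Infinite (Cosets n H)] (M : ℕ) : ∃ R, M ≤ #(ball H R) := by
  obtain ⟨s, hs⟩ := Infinite.exists_subset_card_eq (Cosets n H) M
  exact ⟨s.sup cosetDist, hs ▸ card_le_card fun x hx => mem_ball.2 (le_sup hx)⟩

lemma boundaryCard_ball_add_le (R : ℕ) :
    boundaryCard (ball H R) + 2 * #(ball H R) ≤ 2 * n * #(ball H R) + 2 := by
  classical
  have hinterior := two_mul_card_sub_one_le_card_filter_mem (ball H R) (mk_one_mem_ball R)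
    cosetDist fun x hx hx1 => (exists_cosetDist_rmul_sgen_lt hx1).imp fun p hp =>
      ⟨mem_ball.2 (hp.le.trans (mem_ball.1 hx)), hp⟩
  have hpos := card_pos.2 ⟨_, mk_one_mem_ball (H := H) R⟩
  have hsplit := boundaryCard_add_card_filter_mem (ball H R)
  omega

end SchreierGraph

lemma isoConst_le {n : ℕ} {H : Subgroup (F n)} {A : Finset (Cosets n H)} (hA : A.Nonempty) :
    isoConst n H ≤ boundaryCard A / (2 * n * #A) :=
  csInf_le ⟨0, by rintro _ ⟨B, -, rfl⟩; positivity⟩ ⟨A, hA, rfl⟩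

-- The cases `n = 0` and `k = 0` hold through the junk value `x / 0 = 0`.
lemma div_le_of_add_two_mul_le {b k n : ℕ} (h : b + 2 * k ≤ 2 * n * k + 2) :
    (b : ℝ) / (2 * n * k) ≤ (n - 1) / n + (n : ℝ)⁻¹ * (k : ℝ)⁻¹ := by
  rcases Nat.eq_zero_or_pos n with rfl | hn
  · simp
  rcases Nat.eq_zero_or_pos k with rfl | hk
  · simp only [CharP.cast_eq_zero, mul_zero, div_zero, inv_zero, add_zero]
    exact div_nonneg (sub_nonneg.2 (Nat.one_le_cast.2 hn)) n.cast_nonneg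
  have hb : (b : ℝ) ≤ 2 * (n - 1) * k + 2 := by
    have : (b : ℝ) + 2 * k ≤ 2 * n * k + 2 := by exact_mod_cast h
    linarith
  calc (b : ℝ) / (2 * n * k) ≤ (2 * (n - 1) * k + 2) / (2 * n * k) := by gcongr
    _ = (n - 1) / n + (n : ℝ)⁻¹ * (k : ℝ)⁻¹ := by field_simp

theorem stmt9_general (n : ℕ) (H : Subgroup (F n))
    (hindex : Infinite (F n ⧸ H)) :
    isoConst n H ≤ (n - 1) / n := by
  have : Infinite (Cosets n H) :=
    (QuotientGroup.quotientRightRelEquivQuotientLeftRel H).infinite_iff.2 hindex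
  have hcard : Tendsto (fun R => #(ball H R)) atTop atTop :=
    tendsto_atTop_atTop_of_monotone (fun _ _ h => card_le_card (ball_mono h)) exists_le_card_ball
  have hbound : Tendsto (fun R => (n - 1 : ℝ) / n + (n : ℝ)⁻¹ * (#(ball H R) : ℝ)⁻¹) atTop
      (𝓝 ((n - 1) / n)) := by
    simpa using tendsto_const_nhds.add
      ((tendsto_inv_atTop_zero.comp
        (tendsto_natCast_atTop_atTop (R := ℝ) |>.comp hcard)).const_mul _)
  refine ge_of_tendsto' hbound fun R => ?_
  exact (isoConst_le ⟨_, mk_one_mem_ball R⟩).trans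
    (div_le_of_add_two_mul_le (boundaryCard_ball_add_le R))

/-- If `H ≤ F_n` (`n ≥ 2`) has infinite index, then
`i(Γ_H) ≤ (n−1)/n = i(T_n)`. -/
theorem stmt9 (n : ℕ) (hn : 2 ≤ n) (H : Subgroup (F n))
    (hindex : Infinite (F n ⧸ H)) :
    isoConst n H ≤ (n - 1) / n :=
  stmt9_general n H hindex

end JM
end
end
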